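/- arXiv:1610.07447 — 2 statements merged into one kernel-verified Lean document; each statement's English description precedes it below -/
import Mathlib

section
/- Let G be a group and n a positive integer. The group of units (invertible elements) of the inverse monoid of n×n generalized rook matrices over G⁰ = G ∪ {0} is isomorphic to the wreath product G ≀ Sym(Fin n). -/
/-!
A wreath product element `(g; σ)` gives the monomial rook matrix whose column `j` carries
`g (σ j)` in row `σ j`; this is an injective monoid homomorphism. Conversely, if `y * x = 1`
then no column of `x` is zero, so the rows used by the columns of `x` form an injection
`Fin n → Fin n`, hence a permutation, and `x` lies in the image.
-/

/-- A generalized rook matrix of order `n` over the group with zero `G⁰`: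
an `n × n` matrix over `G ∪ {0}` with at most one nonzero entry in each row
and each column.  We record, for each column `j`, the (optional) pair
`(entry, row)` of its unique nonzero entry; the field `inj` states that
distinct columns use distinct rows. -/
structure Rook (n : ℕ) (G : Type*) [Group G] : Type _ where
  col : Fin n → Option (G × Fin n)
  inj : ∀ ⦃j k : Fin n⦄ ⦃p q : G × Fin n⦄,
      col j = some p → col k = some q → p.2 = q.2 → j = k

namespace Rook

variable {n : ℕ} {G : Type*} [Group G]

theorem ext' {x y : Rook n G} (h : x.col = y.col) : x = y := by
  cases x; cases y; cases h; rfl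

/-- Matrix multiplication of generalized rook matrices. -/
instance : Mul (Rook n G) where
  mul x y :=
  { col := fun j => (y.col j).bind fun p => (x.col p.2).map fun q => (q.1 * p.1, q.2)
    inj := by
      intro j k p q hp hq hpq
      simp only [Option.bind_eq_some_iff, Option.map_eq_some_iff] at hp hq
      obtain ⟨pj, hyj, qj, hxj, rfl⟩ := hp
      obtain ⟨pk, hyk, qk, hxk, rfl⟩ := hq
      exact y.inj hyj hyk (x.inj hxj hxk hpq) }

theorem mul_col (x y : Rook n G) (j : Fin n) :
    (x * y).col j = (y.col j).bind fun p => (x.col p.2).map fun q => (q.1 * p.1, q.2) :=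
  rfl

/-- The identity matrix. -/
instance : One (Rook n G) where
  one :=
  { col := fun j => some (1, j)
    inj := by
      intro j k p q hp hq hpq
      simp only [Option.some.injEq] at hp hq
      subst hp; subst hq; exact hpq }

theorem one_col (j : Fin n) : (1 : Rook n G).col j = some (1, j) := rfl

/-- The zero matrix. -/
instance : Zero (Rook n G) where
  zero :=
  { col := fun _ => none
    inj := fun _ _ _ _ hp _ _ => nomatch hp }

instance : Monoid (Rook n G) where
  mul_assoc x y z := by
    refine ext' (funext fun j => ?_)
    simp only [mul_col]
    rcases hz : z.col j with _ | p
    · simp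
    rcases hy : y.col p.2 with _ | p'
    · simp [hy]
    rcases hx : x.col p'.2 with _ | p''
    · simp [hy, hx]
    simp [hy, hx, mul_assoc]
  one_mul x := by
    refine ext' (funext fun j => ?_)
    simp only [mul_col]
    rcases hx : x.col j with _ | p <;> simp [one_col]
  mul_one x := by
    refine ext' (funext fun j => ?_)
    simp only [mul_col, one_col]
    rcases hx : x.col j with _ | p <;> simp [hx]

open scoped Classical in
/-- The inverse of a generalized rook matrix (conjugate transpose pattern). -/
noncomputable instance : Inv (Rook n G) where
  inv x :=
  { col := fun i =>
      if h : ∃ jp : Fin n × (G × Fin n), x.col jp.1 = some jp.2 ∧ jp.2.2 = i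
      then some ((h.choose.2.1)⁻¹, h.choose.1)
      else none
    inj := by
      intro i i' p q hp hq hpq
      split_ifs at hp hq with h h'
      obtain ⟨hcol, hrow⟩ := h.choose_spec
      obtain ⟨hcol', hrow'⟩ := h'.choose_spec
      injection hp with hp'
      injection hq with hq'
      subst hp'; subst hq'
      have hj : h.choose.1 = h'.choose.1 := hpq
      rw [← hj, hcol] at hcol'
      have hpq2 : h.choose.2 = h'.choose.2 := Option.some.inj hcol'
      rw [← hrow, ← hrow', hpq2] }

end Rook

/-- The action of the symmetric group on `Fin n` on `Fin n → G` by permuting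
coordinates, as a homomorphism into the automorphism group. -/
def permAction (G : Type*) [Group G] (n : ℕ) :
    Equiv.Perm (Fin n) →* MulAut (Fin n → G) where
  toFun σ :=
    { toFun := fun f => f ∘ σ.symm
      invFun := fun f => f ∘ σ
      left_inv := fun f => by ext i; simp
      right_inv := fun f => by ext i; simp
      map_mul' := fun f g => rfl }
  map_one' := by
    ext f i
    rfl
  map_mul' σ τ := by
    ext f i
    simp [Equiv.Perm.mul_def, Equiv.symm_trans_apply]

/-- The permutational wreath product `G ≀ Sym(Fin n)`: the semidirect product
of `Fin n → G` by `Equiv.Perm (Fin n)` acting by permuting coordinates. -/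
abbrev Wreath (G : Type*) [Group G] (n : ℕ) :=
  SemidirectProduct (Fin n → G) (Equiv.Perm (Fin n)) (permAction G n)



namespace Rook

variable {n : ℕ} {G : Type*} [Group G]

def ofWreath : Wreath G n →* Rook n G where
  toFun w :=
  { col := fun j => some (w.left (w.right j), w.right j)
    inj := fun _ _ _ _ hp hq hpq => by
      cases hp; cases hq
      exact w.right.injective hpq }
  map_one' := ext' rfl
  map_mul' a b := ext' <| funext fun j => by
    simp [mul_col, permAction]

theorem ofWreath_col (w : Wreath G n) (j : Fin n) :
    (ofWreath w).col j = some (w.left (w.right j), w.right j) :=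
  rfl

theorem ofWreath_injective : Function.Injective (ofWreath : Wreath G n →* Rook n G) := by
  intro a b h
  have hcol : ∀ j, (a.left (a.right j), a.right j) = (b.left (b.right j), b.right j) :=
    fun j => Option.some.inj (congrFun (congrArg col h) j)
  have hright : a.right = b.right := Equiv.ext fun j => (Prod.ext_iff.mp (hcol j)).2
  refine SemidirectProduct.ext (funext fun i => ?_) hright
  simpa [hright] using (Prod.ext_iff.mp (hcol (a.right.symm i))).1

theorem col_ne_none_of_mul_eq_one {x y : Rook n G} (h : y * x = 1) (j : Fin n) :
    x.col j ≠ none := by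
  intro hj
  have := congrFun (congrArg col h) j
  simp [mul_col, one_col, hj] at this

theorem exists_ofWreath_eq_of_mul_eq_one {x y : Rook n G} (h : y * x = 1) :
    ∃ w : Wreath G n, ofWreath w = x := by
  choose e he using fun j => Option.ne_none_iff_exists'.mp (col_ne_none_of_mul_eq_one h j)
  have hrow : Function.Injective fun j => (e j).2 := fun j k hjk => x.inj (he j) (he k) hjk
  let σ : Equiv.Perm (Fin n) := Equiv.ofBijective _ hrow.bijective_of_finite
  refine ⟨⟨fun i => (e (σ.symm i)).1, σ⟩, ext' (funext fun j => ?_)⟩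
  rw [ofWreath_col, he j]
  exact congrArg some (Prod.ext (congrArg (fun k => (e k).1) (σ.symm_apply_apply j)) rfl)

end Rook

theorem stmt13_general (n : ℕ) (G : Type*) [Group G] :
    Nonempty ((Rook n G)ˣ ≃* Wreath G n) := by
  have hbij : Function.Bijective (Rook.ofWreath.toHomUnits : Wreath G n →* (Rook n G)ˣ) := by
    refine ⟨fun a b h => Rook.ofWreath_injective (congrArg Units.val h), fun u => ?_⟩
    obtain ⟨w, hw⟩ := Rook.exists_ofWreath_eq_of_mul_eq_one u.inv_mul
    exact ⟨w, Units.ext hw⟩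
  exact ⟨(MulEquiv.ofBijective _ hbij).symm⟩

/-- The group of units of the monoid `Matₙ(G⁰)` of generalized rook matrices
over `G⁰ = G ∪ {0}` is isomorphic to the wreath product `G ≀ Sym(Fin n)`. -/
theorem stmt13 (n : ℕ) (hn : 0 < n) (G : Type*) [Group G] :
    Nonempty ((Rook n G)ˣ ≃* Wreath G n) :=
  stmt13_general n G
end

section
/- Let G and H be groups and n a positive integer. Then G⁰ embeds as a monoid with zero into Matₙ(H⁰) via a zero-preserving multiplicative embedding sending 1 to an idempotent, if and only if G embeds as a subgroup into the wreath product H ≀ Sym(Fin m) for some m ≤ n. -/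
/-! The corner `e Matₙ(H⁰) e` of an idempotent `e` of rank `m` has unit group `H ≀ Sym(Fin m)`,
realised as the monomial matrices supported on the rows and columns of `e`. For an embedding
`φ` of `G⁰` and `e = φ 1`, each `φ g` lies in that corner (`φ g = φ g e = e φ g`) and has a
nonzero entry in every column of `e` (`φ g⁻¹ φ g = e`), hence is such a monomial matrix; this
gives the embedding of `G`. Conversely, the corner embedding of `H ≀ Sym(Fin m)` for `m ≤ n`,
extended by `0 ↦ 0`, embeds `G⁰`, as long as `m > 0`. -/

namespace Rook

variable {n : ℕ} {G : Type*} [Group G]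

instance : MulZeroClass (Rook n G) where
  zero_mul x := ext' <| funext fun j => by
    rw [mul_col]
    cases x.col j <;> rfl
  mul_zero _ := rfl

theorem mul_col_of_eq_some {x y : Rook n G} {j : Fin n} {p q : G × Fin n}
    (hy : y.col j = some p) (hx : x.col p.2 = some q) :
    (x * y).col j = some (q.1 * p.1, q.2) := by
  simp [mul_col, hy, hx]

theorem col_eq_none_of_mul_eq {x y : Rook n G} (h : x * y = x) {j : Fin n}
    (hj : y.col j = none) : x.col j = none := by
  rw [← h, mul_col, hj, Option.bind_none]

theorem isSome_col_of_mul_eq {x y z : Rook n G} (h : y * x = z) {j : Fin n}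
    (hj : (z.col j).isSome) : (x.col j).isSome := by
  rw [← h, mul_col] at hj
  cases hx : x.col j <;> simp_all

theorem isSome_col_row_of_mul_eq_self {x y : Rook n G} (h : y * x = x) {j : Fin n}
    {p : G × Fin n} (hj : x.col j = some p) : (y.col p.2).isSome := by
  have hcol := congrArg (col · j) h
  rw [mul_col, hj, Option.bind_some] at hcol
  cases hy : y.col p.2 <;> simp_all

end Rook

namespace Wreath

variable {m n : ℕ} {H : Type*} [Group H]

/-- `w = (f, σ)` acts as the monomial matrix with entry `f (σ i)` in column `i`, row `σ i`,
placed here on the rows and columns `κ`; the columns outside `κ` are zero. -/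
noncomputable def toRookFun (κ : Fin m ↪ Fin n) (w : Wreath H m) : Fin n → Option (H × Fin n) :=
  Function.extend κ (fun i => some (w.left (w.right i), κ (w.right i))) fun _ => none

theorem toRookFun_apply (κ : Fin m ↪ Fin n) (w : Wreath H m) (i : Fin m) :
    toRookFun κ w (κ i) = some (w.left (w.right i), κ (w.right i)) :=
  κ.injective.extend_apply _ _ i

theorem toRookFun_of_notMem_range (κ : Fin m ↪ Fin n) (w : Wreath H m) {j : Fin n}
    (hj : j ∉ Set.range κ) : toRookFun κ w j = none :=
  Function.extend_apply' _ _ j hj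

theorem exists_eq_of_toRookFun_eq_some {κ : Fin m ↪ Fin n} {w : Wreath H m} {j : Fin n}
    {p : H × Fin n} (hj : toRookFun κ w j = some p) :
    ∃ i, κ i = j ∧ p = (w.left (w.right i), κ (w.right i)) := by
  by_cases hr : j ∈ Set.range κ
  · obtain ⟨i, rfl⟩ := hr
    exact ⟨i, rfl, Option.some.inj (hj.symm.trans (toRookFun_apply κ w i))⟩
  · simp [toRookFun_of_notMem_range κ w hr] at hj

noncomputable def toRook (κ : Fin m ↪ Fin n) : Wreath H m →ₙ* Rook n H where
  toFun w :=
    { col := toRookFun κ w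
      inj := by
        intro j k p q hp hq hpq
        obtain ⟨i, rfl, rfl⟩ := exists_eq_of_toRookFun_eq_some hp
        obtain ⟨i', rfl, rfl⟩ := exists_eq_of_toRookFun_eq_some hq
        rw [w.right.injective (κ.injective hpq)] }
  map_mul' w₁ w₂ := Rook.ext' <| funext fun j => by
    by_cases hj : j ∈ Set.range κ
    · obtain ⟨i, rfl⟩ := hj
      rw [Rook.mul_col_of_eq_some (toRookFun_apply κ w₂ i) (toRookFun_apply κ w₁ _)]
      simp [toRookFun_apply, permAction]
    · simp [Rook.mul_col, toRookFun_of_notMem_range κ _ hj]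

theorem toRook_col_apply (κ : Fin m ↪ Fin n) (w : Wreath H m) (i : Fin m) :
    (toRook κ w).col (κ i) = some (w.left (w.right i), κ (w.right i)) :=
  toRookFun_apply κ w i

theorem toRook_col_of_notMem_range (κ : Fin m ↪ Fin n) (w : Wreath H m) {j : Fin n}
    (hj : j ∉ Set.range κ) : (toRook κ w).col j = none :=
  toRookFun_of_notMem_range κ w hj

theorem toRook_injective (κ : Fin m ↪ Fin n) : Function.Injective (toRook (H := H) κ) := by
  intro w₁ w₂ h
  have hcol (i : Fin m) := (toRook_col_apply κ w₁ i).symm.trans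
    ((congrArg (Rook.col · (κ i)) h).trans (toRook_col_apply κ w₂ i))
  simp only [Option.some.injEq, Prod.mk.injEq, κ.injective.eq_iff] at hcol
  have hright : w₁.right = w₂.right := Equiv.ext fun i => (hcol i).2
  refine SemidirectProduct.ext (funext fun k => ?_) hright
  simpa [hright] using (hcol (w₂.right.symm k)).1

theorem toRook_ne_zero (κ : Fin m ↪ Fin n) (hm : 0 < m) (w : Wreath H m) : toRook κ w ≠ 0 :=
  fun h => by simpa [h] using toRook_col_apply κ w ⟨0, hm⟩

theorem exists_toRook_eq (κ : Fin m ↪ Fin n) {x : Rook n H}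
    (hsome : ∀ i, ∃ p, x.col (κ i) = some p ∧ p.2 ∈ Set.range κ)
    (hnone : ∀ j ∉ Set.range κ, x.col j = none) : ∃ w, toRook κ w = x := by
  have hsome' : ∀ i, ∃ a k, x.col (κ i) = some (a, κ k) := fun i => by
    obtain ⟨⟨a, _⟩, hp, k, rfl⟩ := hsome i
    exact ⟨a, k, hp⟩
  choose a τ hτ using hsome'
  have hτ_inj : Function.Injective τ := fun i i' h =>
    κ.injective (x.inj (hτ i) (hτ i') (congrArg κ h))
  let σ := Equiv.ofBijective τ (Finite.injective_iff_bijective.mp hτ_inj)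
  refine ⟨⟨fun k => a (σ.symm k), σ⟩, Rook.ext' (funext fun j => ?_)⟩
  by_cases hj : j ∈ Set.range κ
  · obtain ⟨i, rfl⟩ := hj
    rw [toRook_col_apply, hτ]
    simp [σ]
  · rw [toRook_col_of_notMem_range κ _ hj, hnone j hj]

instance : Subsingleton (Wreath H 0) :=
  ⟨fun _ _ => SemidirectProduct.ext (Subsingleton.elim _ _) (Subsingleton.elim _ _)⟩

end Wreath

namespace WithZero

variable {α M : Type*} [Mul α] [MulZeroClass M]

def liftMulHom (f : α →ₙ* M) : WithZero α →ₙ* M where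
  toFun := recZeroCoe 0 f
  map_mul'
    | 0, _ => (zero_mul _).symm
    | (_ : α), 0 => (mul_zero _).symm
    | (_ : α), (_ : α) => map_mul f _ _

theorem liftMulHom_injective {f : α →ₙ* M} (hf : Function.Injective f) (hf₀ : ∀ a, f a ≠ 0) :
    Function.Injective (liftMulHom f)
  | 0, 0, _ => rfl
  | 0, (b : α), h => (hf₀ b h.symm).elim
  | (a : α), 0, h => (hf₀ a h).elim
  | (a : α), (b : α), h => congrArg _ (hf h)

end WithZero

theorem exists_injective_wreath_of_mulHom {G H : Type*} [Group G] [Group H] {n : ℕ}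
    (ρ : G →ₙ* Rook n H) (hρ : Function.Injective ρ) :
    ∃ m, m ≤ n ∧ ∃ ψ : G →* Wreath H m, Function.Injective ψ := by
  let e := ρ 1
  let S := Finset.univ.filter fun j => (e.col j).isSome
  let κ : Fin S.card ↪ Fin n := (S.orderEmbOfFin rfl).toEmbedding
  have hκ (j : Fin n) : j ∈ Set.range κ ↔ (e.col j).isSome := by
    simp [κ, S, Finset.range_orderEmbOfFin]
  have hρ_mem (g : G) : ∃ w, Wreath.toRook κ w = ρ g := by
    refine Wreath.exists_toRook_eq κ (fun i => ?_) (fun j hj => ?_)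
    · have hinv : ρ g⁻¹ * ρ g = e := by rw [← map_mul, inv_mul_cancel]
      obtain ⟨p, hp⟩ := Option.isSome_iff_exists.mp
        (Rook.isSome_col_of_mul_eq hinv ((hκ _).mp ⟨i, rfl⟩))
      have hleft : e * ρ g = ρ g := by rw [← map_mul, one_mul]
      exact ⟨p, hp, (hκ _).mpr (Rook.isSome_col_row_of_mul_eq_self hleft hp)⟩
    · exact Rook.col_eq_none_of_mul_eq (by rw [← map_mul, mul_one])
        (Option.not_isSome_iff_eq_none.mp (mt (hκ j).mpr hj))
  choose ψ hψ using hρ_mem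
  refine ⟨S.card, S.card_le_univ.trans_eq (Fintype.card_fin n),
    MonoidHom.mk' ψ fun g h => Wreath.toRook_injective κ ?_,
    fun g h hgh => hρ ((hψ g).symm.trans ((congrArg _ hgh).trans (hψ h)))⟩
  rw [map_mul, hψ, hψ, hψ, map_mul]

/-- `G⁰` embeds into `Matₙ(H⁰)` via a zero-preserving multiplicative embedding
(sending `1` to an idempotent) if and only if `G` embeds as a subgroup into
the wreath product `H ≀ Sym(Fin m)` for some `m ≤ n`. -/
theorem stmt15 (n : ℕ) (hn : 0 < n) (G H : Type*) [Group G] [Group H] :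
    (∃ φ : WithZero G → Rook n H,
        Function.Injective φ ∧
        (∀ a b : WithZero G, φ (a * b) = φ a * φ b) ∧
        φ 0 = 0 ∧ φ 1 * φ 1 = φ 1) ↔
      ∃ m : ℕ, m ≤ n ∧ ∃ ψ : G →* Wreath H m, Function.Injective ψ := by
  constructor
  · rintro ⟨φ, hφ, hmul, -, -⟩
    exact exists_injective_wreath_of_mulHom
      ⟨fun g => φ g, fun a b => by rw [WithZero.coe_mul, hmul]⟩ (hφ.comp WithZero.coe_injective)
  · rintro ⟨m, hmn, ψ, hψ⟩
    -- for `m = 0` every `toRook` is `0`, so a trivial `G` is moved to `m = 1`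
    obtain ⟨m, hm, hmn, ψ, hψ⟩ :
        ∃ m, 0 < m ∧ m ≤ n ∧ ∃ ψ : G →* Wreath H m, Function.Injective ψ := by
      rcases m.eq_zero_or_pos with rfl | hm
      · have : Subsingleton G := hψ.subsingleton
        exact ⟨1, one_pos, hn, 1, Function.injective_of_subsingleton _⟩
      · exact ⟨m, hm, hmn, ψ, hψ⟩
    let φ := WithZero.liftMulHom ((Wreath.toRook (Fin.castLEEmb hmn)).comp ψ.toMulHom)
    refine ⟨φ, WithZero.liftMulHom_injective ((Wreath.toRook_injective _).comp hψ)
      (fun g => Wreath.toRook_ne_zero _ hm (ψ g)), map_mul φ, rfl, ?_⟩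
    rw [← map_mul, one_mul]
end
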